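/- arXiv:1612.02843 — 3 statements merged into one kernel-verified Lean document; each statement's English description precedes it below -/
import Mathlib

section
/- For every integer r ≥ 1 there is no finite connected graph G of order at least 2 whose strong resolving graph G_SR is isomorphic to the complete bipartite graph K_{2,r}. -/
open SimpleGraph

variable {V : Type*}

/-- `u` is maximally distant from `v` in `G`: every neighbor `w` of `u`
satisfies `d(v,w) ≤ d(v,u)`. -/
def MaxDistant (G : SimpleGraph V) (u v : V) : Prop :=
  ∀ w, G.Adj u w → G.dist v w ≤ G.dist v u

/-- `u` and `v` are mutually maximally distant in `G`. -/
def MMD (G : SimpleGraph V) (u v : V) : Prop :=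
  MaxDistant G u v ∧ MaxDistant G v u

/-- The boundary of `G`: vertices maximally distant from some vertex. -/
def boundary (G : SimpleGraph V) : Set V := {u | ∃ v, MaxDistant G u v}

/-- The strong resolving graph on the whole vertex set (`G_{SR+I}`):
two vertices are adjacent iff they are distinct and mutually maximally distant. -/
def srGraphI (G : SimpleGraph V) : SimpleGraph V where
  Adj u v := u ≠ v ∧ MMD G u v
  symm := by
    constructor
    rintro u v ⟨hne, h1, h2⟩
    exact ⟨hne.symm, h2, h1⟩
  loopless := by
    constructor
    rintro u ⟨hne, _⟩
    exact hne rfl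

/-- The strong resolving graph `G_SR`, with vertex set the boundary of `G`. -/
def srGraph (G : SimpleGraph V) : SimpleGraph (boundary G) :=
  (srGraphI G).induce (boundary G)

/-- `u` and `v` are true twins: distinct vertices with equal closed neighborhoods. -/
def TrueTwins (G : SimpleGraph V) (u v : V) : Prop :=
  u ≠ v ∧ insert u (G.neighborSet u) = insert v (G.neighborSet v)

/-- `u` and `v` are false twins: distinct vertices with equal open neighborhoods. -/
def FalseTwins (G : SimpleGraph V) (u v : V) : Prop :=
  u ≠ v ∧ G.neighborSet u = G.neighborSet v

/-- A vertex is simplicial if its neighborhood induces a complete graph. -/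
def IsSimplicial (G : SimpleGraph V) (v : V) : Prop :=
  ∀ a b, G.Adj v a → G.Adj v b → a ≠ b → G.Adj a b

/-- `w` strongly resolves `u` and `v`. -/
def StronglyResolves (G : SimpleGraph V) (w u v : V) : Prop :=
  G.dist w u = G.dist w v + G.dist v u ∨ G.dist w v = G.dist w u + G.dist u v

/-- `S` is a strong metric generator for `G`. -/
def IsStrongMetricGenerator (G : SimpleGraph V) (S : Set V) : Prop :=
  ∀ u v : V, u ≠ v → ∃ w ∈ S, StronglyResolves G w u v

/-- The strong metric dimension of `G`. -/
noncomputable def sdim (G : SimpleGraph V) : ℕ :=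
  sInf {n | ∃ S : Set V, S.ncard = n ∧ IsStrongMetricGenerator G S}

/-- `S` is a vertex cover of `H`. -/
def IsVertexCover (H : SimpleGraph V) (S : Set V) : Prop :=
  ∀ u v : V, H.Adj u v → u ∈ S ∨ v ∈ S

/-- The vertex cover number of `H`. -/
noncomputable def vertexCoverNumber (H : SimpleGraph V) : ℕ :=
  sInf {n | ∃ S : Set V, S.ncard = n ∧ _root_.IsVertexCover H S}

/-- The graph `G*`: distinct vertices adjacent iff at distance at least two
or true twins. -/
def GStar (G : SimpleGraph V) : SimpleGraph V where
  Adj u v := u ≠ v ∧ (2 ≤ G.dist u v ∨ TrueTwins G u v)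
  symm := by
    constructor
    rintro u v ⟨hne, h | h⟩
    · exact ⟨hne.symm, Or.inl (by rwa [G.dist_comm])⟩
    · exact ⟨hne.symm, Or.inr ⟨h.1.symm, h.2.symm⟩⟩
  loopless := by
    constructor
    rintro u ⟨hne, _⟩
    exact hne rfl

/-- The direct (tensor) product of two graphs. -/
def DirectProd {α β : Type*} (G : SimpleGraph α) (H : SimpleGraph β) :
    SimpleGraph (α × β) where
  Adj x y := G.Adj x.1 y.1 ∧ H.Adj x.2 y.2
  symm := ⟨fun _ _ h => ⟨h.1.symm, h.2.symm⟩⟩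
  loopless := ⟨fun x h => G.irrefl h.1⟩

/-- The strong product of two graphs. -/
def StrongProd {α β : Type*} (G : SimpleGraph α) (H : SimpleGraph β) :
    SimpleGraph (α × β) where
  Adj x y := x ≠ y ∧ (x.1 = y.1 ∨ G.Adj x.1 y.1) ∧ (x.2 = y.2 ∨ H.Adj x.2 y.2)
  symm := by
    constructor
    rintro x y ⟨hne, h1, h2⟩
    exact ⟨hne.symm, h1.imp Eq.symm Adj.symm, h2.imp Eq.symm Adj.symm⟩
  loopless := by
    constructor
    rintro x ⟨hne, _⟩
    exact hne rfl

/-- The Cartesian sum (disjunctive product) of two graphs. -/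
def CartSum {α β : Type*} (G : SimpleGraph α) (H : SimpleGraph β) :
    SimpleGraph (α × β) where
  Adj x y := G.Adj x.1 y.1 ∨ H.Adj x.2 y.2
  symm := ⟨fun _ _ h => h.imp Adj.symm Adj.symm⟩
  loopless := ⟨fun x h => h.elim G.irrefl H.irrefl⟩

/-- The lexicographic product of two graphs. -/
def LexProd {α β : Type*} (G : SimpleGraph α) (H : SimpleGraph β) :
    SimpleGraph (α × β) where
  Adj x y := G.Adj x.1 y.1 ∨ (x.1 = y.1 ∧ H.Adj x.2 y.2)
  symm := ⟨fun _ _ h => h.imp Adj.symm (fun h => ⟨h.1.symm, h.2.symm⟩)⟩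
  loopless := ⟨fun x h => h.elim G.irrefl (fun h => H.irrefl h.2)⟩

/-- The disjoint union of `n` copies of the complete graph on `m` vertices. -/
def CopiesComplete (n m : ℕ) : SimpleGraph (Fin n × Fin m) where
  Adj x y := x.1 = y.1 ∧ x.2 ≠ y.2
  symm := ⟨fun _ _ h => ⟨h.1.symm, h.2.symm⟩⟩
  loopless := ⟨fun x h => h.2 rfl⟩

/-- Every pair of vertices lies on a common cycle of length five. -/
def C5Connected (G : SimpleGraph V) : Prop :=
  ∀ u v : V, ∃ (w : V) (c : G.Walk w w), c.IsCycle ∧ c.length = 5 ∧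
    u ∈ c.support ∧ v ∈ c.support


/-! In `K₂,ᵣ` the two vertices of the small side are non-adjacent, yet adjacent to every other
vertex. So if `G_SR ≅ K₂,ᵣ`, there are boundary vertices `a ≠ b` that are not MMD while every
other boundary vertex is MMD with both. If `b` were not maximally distant from `a`, walking
outward from a neighbour of `b` farther from `a` would reach a boundary vertex `z ∉ {a, b}` with
`b` on an `a`–`z` geodesic; then the neighbour of `b` towards `a` is farther from `z` than `b`,
contradicting that `b` is maximally distant from `z`. -/

namespace SimpleGraph.Connected

variable {G : SimpleGraph V}

theorem exists_maxDistant_dist_eq_add [Finite V] (hG : G.Connected) (u v : V) :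
    ∃ z, MaxDistant G z u ∧ G.dist u z = G.dist u v + G.dist v z := by
  obtain ⟨z, hz, hmax⟩ := Set.exists_max_image
    {z | G.dist u z = G.dist u v + G.dist v z} (G.dist u) (Set.toFinite _)
    ⟨v, by simp⟩
  refine ⟨z, fun w hzw => ?_, hz⟩
  by_contra! hlt
  have huw : G.dist u w ≤ G.dist u v + G.dist v w := hG.dist_triangle
  have hvw : G.dist v w ≤ G.dist v z + G.dist z w := hG.dist_triangle
  have hzw1 : G.dist z w = 1 := dist_eq_one_iff_adj.mpr hzw
  have hz : G.dist u z = G.dist u v + G.dist v z := hz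
  have := hmax w (show G.dist u w = G.dist u v + G.dist v w by omega)
  omega

theorem not_maxDistant_of_dist_add_dist_eq (hG : G.Connected) {a b z : V} (hab : a ≠ b)
    (h : G.dist z a + G.dist a b = G.dist z b) : ¬ MaxDistant G a z := by
  intro hmax
  obtain ⟨p, hp⟩ := hG.exists_walk_length_eq_dist a b
  cases p with
  | nil => exact hab rfl
  | @cons _ w _ haw q =>
    have hwb : G.dist w b ≤ q.length := dist_le q
    have hzb : G.dist z b ≤ G.dist z w + G.dist w b := hG.dist_triangle
    have := hmax w haw
    simp only [Walk.length_cons] at hp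
    omega

theorem exists_maxDistant_of_not_maxDistant [Finite V] (hG : G.Connected) {a b : V}
    (h : ¬ MaxDistant G a b) :
    ∃ z, MaxDistant G z b ∧ z ≠ a ∧ z ≠ b ∧ G.dist b a + G.dist a z = G.dist b z := by
  obtain ⟨w, haw, hlt⟩ : ∃ w, G.Adj a w ∧ G.dist b a < G.dist b w := by
    simpa [MaxDistant] using h
  obtain ⟨z, hz, hbz⟩ := hG.exists_maxDistant_dist_eq_add b w
  have haw1 : G.dist a w = 1 := dist_eq_one_iff_adj.mpr haw
  have hbw : G.dist b w ≤ G.dist b a + G.dist a w := hG.dist_triangle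
  have haz : G.dist a z ≤ G.dist a w + G.dist w z := hG.dist_triangle
  have hbz' : G.dist b z ≤ G.dist b a + G.dist a z := hG.dist_triangle
  refine ⟨z, hz, ?_, ?_, by omega⟩ <;> rintro rfl
  · omega
  · rw [dist_self] at hbz
    omega

theorem maxDistant_of_forall_boundary [Finite V] (hG : G.Connected) {a b : V} (hab : a ≠ b)
    (h : ∀ z ∈ boundary G, z ≠ a → z ≠ b → MaxDistant G a z) : MaxDistant G a b := by
  by_contra hnot
  obtain ⟨z, hz, hza, hzb, hbaz⟩ := hG.exists_maxDistant_of_not_maxDistant hnot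
  refine hG.not_maxDistant_of_dist_add_dist_eq hab ?_ (h z ⟨b, hz⟩ hza hzb)
  rw [G.dist_comm (u := z) (v := a), G.dist_comm (u := z) (v := b),
    G.dist_comm (u := a) (v := b)]
  omega

end SimpleGraph.Connected

theorem SimpleGraph.Iso.adj_symm_inl_of_ne {U W : Type*} {H : SimpleGraph U}
    (φ : H ≃g completeBipartiteGraph (Fin 2) W) {x : U} (h₀ : x ≠ φ.symm (.inl 0))
    (h₁ : x ≠ φ.symm (.inl 1)) (i : Fin 2) : H.Adj x (φ.symm (.inl i)) := by
  rw [← φ.map_adj_iff, φ.apply_symm_apply]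
  rcases hx : φ x with j | w
  · obtain rfl : x = φ.symm (.inl j) := by simp [← hx]
    fin_cases j
    exacts [absurd rfl h₀, absurd rfl h₁]
  · simp [completeBipartiteGraph]

theorem stmt8_general (r : ℕ) [Fintype V] (G : SimpleGraph V)
    (hG : G.Connected) :
    ¬ Nonempty (srGraph G ≃g completeBipartiteGraph (Fin 2) (Fin r)) := by
  rintro ⟨φ⟩
  set a := φ.symm (.inl 0)
  set b := φ.symm (.inl 1)
  have hab : (a : V) ≠ b := by simp [a, b, Subtype.ext_iff.symm]
  have hnadj : ¬ (srGraph G).Adj a b := by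
    rw [← φ.map_adj_iff, φ.apply_symm_apply, φ.apply_symm_apply]
    simp [completeBipartiteGraph]
  have hmax (i : Fin 2) (z : V) (hz : z ∈ boundary G) (hza : z ≠ a) (hzb : z ≠ b) :
      MaxDistant G (φ.symm (.inl i)) z :=
    (φ.adj_symm_inl_of_ne (x := ⟨z, hz⟩) (by simpa [Subtype.ext_iff] using hza)
      (by simpa [Subtype.ext_iff] using hzb) i).2.2
  exact hnadj ⟨hab, hG.maxDistant_of_forall_boundary hab (hmax 0),
    hG.maxDistant_of_forall_boundary hab.symm fun z hz hzb hza => hmax 1 z hz hza hzb⟩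

theorem stmt8 (r : ℕ) (hr : 1 ≤ r) [Fintype V] (G : SimpleGraph V)
    (hG : G.Connected) (hn : 2 ≤ Fintype.card V) :
    ¬ Nonempty (srGraph G ≃g completeBipartiteGraph (Fin 2) (Fin r)) :=
  stmt8_general r G hG
end

section
/- For all integers r, t ≥ 1 and n ≥ 3, the strong resolving graph of the direct product K_{r,t} × K_n is isomorphic to the disjoint union of n copies of the complete graph K_{r+t}. Equivalently, two distinct vertices (g,h) and (g',h') of K_{r,t} × K_n are mutually maximally distant if and only if h = h'. -/
open SimpleGraph

variable {V : Type*}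

/-!
In `K_{r,t} × K_n` the vertices `(g, h)` and `(g', h')` are adjacent iff `g`, `g'` lie on
opposite sides and `h ≠ h'`. Hence two vertices on the same side with the same `h` are false
twins, so mutually maximally distant. Two vertices on opposite sides with the same `h` are at
distance at least `2`, while every neighbour of one lies on the side of the other, at distance
at most `2`; so they are mutually maximally distant too. If `h ≠ h'`, some neighbour of `(g, h)`
is farther from `(g', h')` than `(g, h)` is: on the same side, `(a, h')` with `a` on the other
side is at distance `3` (an odd distance that is not `1`) while `d((g, h), (g', h')) = 2`; on
opposite sides, `(g', k)` with `k ∉ {h, h'}` is at distance `2` while the vertices are adjacent.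
-/

section FalseTwins

variable {G : SimpleGraph V} {u v : V}

theorem FalseTwins.symm (h : FalseTwins G u v) : FalseTwins G v u :=
  ⟨h.1.symm, h.2.symm⟩

theorem FalseTwins.maxDistant (h : FalseTwins G u v) : MaxDistant G u v := by
  intro w huw
  have hvw : G.Adj v w := by rw [← mem_neighborSet, ← h.2]; exact huw
  rw [dist_eq_one_iff_adj.mpr hvw]
  exact (hvw.reachable.trans huw.symm.reachable).pos_dist_of_ne h.1.symm

theorem FalseTwins.mmd (h : FalseTwins G u v) : MMD G u v :=
  ⟨h.maxDistant, h.symm.maxDistant⟩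

end FalseTwins

theorem Sum.exists_isLeft_ne {α β : Type*} [Nonempty α] [Nonempty β] (g : α ⊕ β) :
    ∃ a : α ⊕ β, a.isLeft ≠ g.isLeft := by
  cases g with
  | inl _ => exact ⟨.inr (Classical.arbitrary β), by simp⟩
  | inr _ => exact ⟨.inl (Classical.arbitrary α), by simp⟩

theorem completeBipartiteGraph_adj_iff {α β : Type*} {g g' : α ⊕ β} :
    (completeBipartiteGraph α β).Adj g g' ↔ g.isLeft ≠ g'.isLeft := by
  cases g <;> cases g' <;> simp

namespace CompleteBipartiteTimesComplete

variable {α β ι : Type*} {g g' : α ⊕ β} {h h' : ι}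

variable (α β ι) in
abbrev graph : SimpleGraph ((α ⊕ β) × ι) :=
  DirectProd (completeBipartiteGraph α β) (⊤ : SimpleGraph ι)

theorem adj_iff : (graph α β ι).Adj (g, h) (g', h') ↔ g.isLeft ≠ g'.isLeft ∧ h ≠ h' :=
  completeBipartiteGraph_adj_iff.and (top_adj h h')

theorem falseTwins_of_isLeft_eq (hs : g.isLeft = g'.isLeft) (hne : g ≠ g') (h : ι) :
    FalseTwins (graph α β ι) (g, h) (g', h) := by
  refine ⟨by simpa using hne, ?_⟩
  ext ⟨a, k⟩
  simp [mem_neighborSet, adj_iff, hs]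

variable [Nonempty α] [Nonempty β]

theorem exists_adj_adj_of_isLeft_eq (hι : ∀ h h' : ι, ∃ k, k ≠ h ∧ k ≠ h')
    (hs : g.isLeft = g'.isLeft) (h h' : ι) :
    ∃ x, (graph α β ι).Adj (g, h) x ∧ (graph α β ι).Adj x (g', h') := by
  obtain ⟨a, ha⟩ := Sum.exists_isLeft_ne g
  obtain ⟨k, hkh, hkh'⟩ := hι h h'
  exact ⟨(a, k), adj_iff.mpr ⟨ha.symm, hkh.symm⟩, adj_iff.mpr ⟨hs ▸ ha, hkh'⟩⟩

theorem dist_le_two_of_isLeft_eq (hι : ∀ h h' : ι, ∃ k, k ≠ h ∧ k ≠ h')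
    (hs : g.isLeft = g'.isLeft) (h h' : ι) : (graph α β ι).dist (g, h) (g', h') ≤ 2 := by
  obtain ⟨x, h₁, h₂⟩ := exists_adj_adj_of_isLeft_eq hι hs h h'
  exact dist_le (.cons h₁ (.cons h₂ .nil))

theorem preconnected (hι : ∀ h h' : ι, ∃ k, k ≠ h ∧ k ≠ h') : (graph α β ι).Preconnected := by
  have reachable_of_isLeft_eq {g g' : α ⊕ β} (hs : g.isLeft = g'.isLeft) (h h' : ι) :
      (graph α β ι).Reachable (g, h) (g', h') := by
    obtain ⟨x, h₁, h₂⟩ := exists_adj_adj_of_isLeft_eq hι hs h h'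
    exact h₁.reachable.trans h₂.reachable
  rintro ⟨g, h⟩ ⟨g', h'⟩
  by_cases hs : g.isLeft = g'.isLeft
  · exact reachable_of_isLeft_eq hs h h'
  · obtain ⟨k, hkh, -⟩ := hι h h
    have hadj : (graph α β ι).Adj (g, h) (g', k) := adj_iff.mpr ⟨hs, hkh.symm⟩
    exact hadj.reachable.trans (reachable_of_isLeft_eq rfl k h')

theorem one_lt_dist (hι : ∀ h h' : ι, ∃ k, k ≠ h ∧ k ≠ h') {x y : (α ⊕ β) × ι} (hne : x ≠ y)
    (hxy : ¬ (graph α β ι).Adj x y) : 1 < (graph α β ι).dist x y :=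
  (preconnected hι x y).one_lt_dist_of_ne_of_not_adj hne hxy

/-- The sides of the bipartition properly `2`-colour the product, so every walk between
opposite sides has odd length. -/
theorem three_le_dist_of_isLeft_ne (hι : ∀ h h' : ι, ∃ k, k ≠ h ∧ k ≠ h')
    (hs : g.isLeft ≠ g'.isLeft) (h : ι) : 3 ≤ (graph α β ι).dist (g, h) (g', h) := by
  let c : (graph α β ι).Coloring Bool :=
    (CompleteBipartiteGraph.bicoloring α β).comp ⟨Prod.fst, fun e => e.1⟩
  obtain ⟨p, hp⟩ := (preconnected hι (g, h) (g', h)).exists_walk_length_eq_dist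
  have hodd : Odd p.length := by
    have hc (x : (α ⊕ β) × ι) : c x = x.1.isRight := rfl
    rw [c.odd_length_iff_not_congr, hc, hc]
    cases g <;> cases g' <;> simp_all
  have hgt : 1 < (graph α β ι).dist (g, h) (g', h) :=
    one_lt_dist hι (fun e => hs (congrArg (·.1.isLeft) e)) (by simp [adj_iff])
  obtain ⟨m, hm⟩ := hodd
  omega

theorem maxDistant_of_isLeft_ne (hι : ∀ h h' : ι, ∃ k, k ≠ h ∧ k ≠ h')
    (hs : g.isLeft ≠ g'.isLeft) (h : ι) : MaxDistant (graph α β ι) (g, h) (g', h) := by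
  rintro ⟨a, k⟩ hadj
  have has : g'.isLeft = a.isLeft :=
    (Bool.eq_not_of_ne hs.symm).trans (Bool.eq_not_of_ne (adj_iff.mp hadj).1.symm).symm
  calc (graph α β ι).dist (g', h) (a, k) ≤ 2 := dist_le_two_of_isLeft_eq hι has h k
    _ ≤ (graph α β ι).dist (g', h) (g, h) :=
      one_lt_dist hι (fun e => hs (congrArg (·.1.isLeft) e).symm) (by simp [adj_iff])

theorem mmd_of_snd_eq (hι : ∀ h h' : ι, ∃ k, k ≠ h ∧ k ≠ h') (hne : g ≠ g') (h : ι) :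
    MMD (graph α β ι) (g, h) (g', h) := by
  by_cases hs : g.isLeft = g'.isLeft
  · exact (falseTwins_of_isLeft_eq hs hne h).mmd
  · exact ⟨maxDistant_of_isLeft_ne hι hs h, maxDistant_of_isLeft_ne hι (Ne.symm hs) h⟩

theorem not_maxDistant_of_snd_ne (hι : ∀ h h' : ι, ∃ k, k ≠ h ∧ k ≠ h') (hh : h ≠ h') :
    ¬ MaxDistant (graph α β ι) (g, h) (g', h') := by
  intro hmax
  by_cases hs : g.isLeft = g'.isLeft
  · obtain ⟨a, ha⟩ := Sum.exists_isLeft_ne g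
    have hfar := hmax (a, h') (adj_iff.mpr ⟨ha.symm, hh⟩)
    have h₃ := three_le_dist_of_isLeft_ne hι (hs ▸ ha.symm) h'
    have h₂ := dist_le_two_of_isLeft_eq hι hs.symm h' h
    omega
  · obtain ⟨k, hkh, hkh'⟩ := hι h h'
    have hfar := hmax (g', k) (adj_iff.mpr ⟨hs, hkh.symm⟩)
    rw [dist_eq_one_iff_adj.mpr (adj_iff.mpr ⟨Ne.symm hs, hh.symm⟩)] at hfar
    have h₂ := one_lt_dist hι (x := (g', h')) (y := (g', k)) (by simpa using hkh'.symm)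
      (by simp [adj_iff])
    omega

theorem mmd_iff (hι : ∀ h h' : ι, ∃ k, k ≠ h ∧ k ≠ h') (hne : (g, h) ≠ (g', h')) :
    MMD (graph α β ι) (g, h) (g', h') ↔ h = h' := by
  refine ⟨fun hm => by_contra fun hh => not_maxDistant_of_snd_ne hι hh hm.1, ?_⟩
  rintro rfl
  exact mmd_of_snd_eq hι (by simpa using hne) h

theorem mem_boundary (hι : ∀ h h' : ι, ∃ k, k ≠ h ∧ k ≠ h') (x : (α ⊕ β) × ι) :
    x ∈ boundary (graph α β ι) := by
  obtain ⟨a, ha⟩ := Sum.exists_isLeft_ne x.1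
  exact ⟨(a, x.2), maxDistant_of_isLeft_ne hι (Ne.symm ha) x.2⟩

theorem srGraphI_adj_iff (hι : ∀ h h' : ι, ∃ k, k ≠ h ∧ k ≠ h') {x y : (α ⊕ β) × ι} :
    (srGraphI (graph α β ι)).Adj x y ↔ x.2 = y.2 ∧ x.1 ≠ y.1 := by
  obtain ⟨g, h⟩ := x
  obtain ⟨g', h'⟩ := y
  constructor
  · rintro ⟨hne, hm⟩
    obtain rfl := (mmd_iff hι hne).mp hm
    exact ⟨rfl, by simpa using hne⟩
  · rintro ⟨rfl, hg⟩
    exact ⟨by simpa using hg, mmd_of_snd_eq hι hg h⟩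

end CompleteBipartiteTimesComplete

theorem Fin.exists_ne_ne {n : ℕ} (hn : 3 ≤ n) (a b : Fin n) : ∃ c, c ≠ a ∧ c ≠ b := by
  have hcard : ({a, b} : Finset (Fin n)).card < (Finset.univ : Finset (Fin n)).card :=
    Finset.card_le_two.trans_lt (by rw [Finset.card_univ, Fintype.card_fin]; omega)
  obtain ⟨c, -, hc⟩ := Finset.exists_mem_notMem_of_card_lt_card hcard
  exact ⟨c, by simpa [not_or] using hc⟩

open CompleteBipartiteTimesComplete in
def srGraphIsoCopiesComplete {r t n : ℕ} (hr : 1 ≤ r) (ht : 1 ≤ t) (hn : 3 ≤ n) :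
    srGraph (graph (Fin r) (Fin t) (Fin n)) ≃g CopiesComplete n (r + t) :=
  have : Nonempty (Fin r) := ⟨⟨0, hr⟩⟩
  have : Nonempty (Fin t) := ⟨⟨0, ht⟩⟩
  { toEquiv := (Equiv.subtypeUnivEquiv (mem_boundary (Fin.exists_ne_ne hn))).trans
      ((Equiv.prodComm _ _).trans ((Equiv.refl _).prodCongr finSumFinEquiv))
    map_rel_iff' := by
      simp [CopiesComplete, srGraph, srGraphI_adj_iff (Fin.exists_ne_ne hn)] }

theorem stmt15 (r t n : ℕ) (hr : 1 ≤ r) (ht : 1 ≤ t) (hn : 3 ≤ n) :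
    Nonempty (srGraph (DirectProd (completeBipartiteGraph (Fin r) (Fin t))
        (⊤ : SimpleGraph (Fin n))) ≃g CopiesComplete n (r + t)) ∧
    (∀ (g g' : Fin r ⊕ Fin t) (h h' : Fin n), (g, h) ≠ (g', h') →
      (MMD (DirectProd (completeBipartiteGraph (Fin r) (Fin t))
        (⊤ : SimpleGraph (Fin n))) (g, h) (g', h') ↔ h = h')) := by
  have : Nonempty (Fin r) := ⟨⟨0, hr⟩⟩
  have : Nonempty (Fin t) := ⟨⟨0, ht⟩⟩
  exact ⟨⟨srGraphIsoCopiesComplete hr ht hn⟩,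
    fun _ _ _ _ hne => CompleteBipartiteTimesComplete.mmd_iff (Fin.exists_ne_ne hn) hne⟩
end

section
/- Let G be a finite connected graph with at least two vertices, let H be a graph with at least two vertices, and let a, b be distinct vertices of G that are not true twins in G. Then for any vertices x, y of H, the vertices (a,x) and (b,y) are mutually maximally distant in the lexicographic product G ∘ H if and only if a and b are mutually maximally distant in G. -/
open SimpleGraph

variable {V : Type*}

/-!
Between distinct `G`-coordinates, distances in `G ∘ H` are just distances in `G`, so the
maximal-distance conditions in the product reduce to those in `G`, except for the neighbours of
`(a, x)` lying in the `H`-layer of `b`. Such neighbours exist only when `a` and `b` are adjacent,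
and two adjacent mutually maximally distant vertices are true twins.
-/

namespace LexProd

variable {α β : Type*} (G : SimpleGraph α) (H : SimpleGraph β)

def layer (y : β) : G →g LexProd G H :=
  ⟨fun u => (u, y), Or.inl⟩

variable {G} (hG : G.Connected)
include hG

theorem dist_fst_le_length {u v : α × β} (p : (LexProd G H).Walk u v) :
    G.dist u.1 v.1 ≤ p.length := by
  induction p with
  | nil => simp
  | @cons u w v h p ih =>
    rw [Walk.length_cons]
    rcases h with h | ⟨h, -⟩
    · have := hG.dist_triangle (u := u.1) (v := w.1) (w := v.1)
      rw [dist_eq_one_iff_adj.mpr h] at this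
      omega
    · rw [h]
      omega

theorem dist_of_ne {a b : α} (hab : a ≠ b) (x y : β) :
    (LexProd G H).dist (a, x) (b, y) = G.dist a b := by
  obtain ⟨p, hp⟩ := hG.exists_walk_length_eq_dist a b
  cases p with
  | nil => exact absurd rfl hab
  | cons h p =>
    let q : (LexProd G H).Walk (a, x) (b, y) := .cons (Or.inl h) (p.map (layer G H y))
    have hq : q.length = G.dist a b := by
      rw [← hp]
      exact congrArg (· + 1) (p.length_map _)
    refine le_antisymm (hq ▸ dist_le q) ?_
    have hne : (LexProd G H).dist (a, x) (b, y) ≠ 0 :=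
      dist_ne_zero_iff_ne_and_reachable.mpr ⟨fun he => hab (congrArg Prod.fst he), ⟨q⟩⟩
    obtain ⟨r, hr⟩ := exists_walk_of_dist_ne_zero hne
    exact hr ▸ dist_fst_le_length H hG r

variable {H} {a b : α} (hab : a ≠ b) (x y : β)
include hab

theorem maxDistant_of_maxDistant (h : MaxDistant (LexProd G H) (a, x) (b, y)) :
    MaxDistant G a b := by
  intro w hw
  by_cases hwb : w = b
  · simp [hwb]
  · simpa [dist_of_ne H hG (Ne.symm hwb), dist_of_ne H hG hab.symm] using h (w, x) (Or.inl hw)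

theorem maxDistant_of_not_adj (hnadj : ¬ G.Adj a b) (h : MaxDistant G a b) :
    MaxDistant (LexProd G H) (a, x) (b, y) := by
  rintro ⟨c, z⟩ (hac | ⟨rfl, -⟩)
  · have hcb : b ≠ c := by rintro rfl; exact hnadj hac
    rw [dist_of_ne H hG hcb, dist_of_ne H hG hab.symm]
    exact h c hac
  · rw [dist_of_ne H hG hab.symm, dist_of_ne H hG hab.symm]

end LexProd

variable {G : SimpleGraph V} {u v : V}

theorem MaxDistant.eq_or_adj_of_adj (h : MaxDistant G u v) (huv : G.Adj u v) {w : V}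
    (huw : G.Adj u w) : w = v ∨ G.Adj v w := by
  have hle := h w huw
  rw [dist_eq_one_iff_adj.mpr huv.symm] at hle
  rcases Nat.le_one_iff_eq_zero_or_eq_one.mp hle with h0 | h1
  · exact Or.inl ((huv.symm.reachable.trans huw.reachable).dist_eq_zero_iff.mp h0).symm
  · exact Or.inr (dist_eq_one_iff_adj.mp h1)

theorem MMD.trueTwins_of_adj (h : MMD G u v) (huv : G.Adj u v) : TrueTwins G u v := by
  refine ⟨huv.ne, Set.ext fun w => ?_⟩
  simp only [Set.mem_insert_iff, mem_neighborSet]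
  constructor
  · rintro (rfl | huw)
    · exact Or.inr huv.symm
    · exact (h.1.eq_or_adj_of_adj huv huw)
  · rintro (rfl | hvw)
    · exact Or.inr huv
    · exact (h.2.eq_or_adj_of_adj huv.symm hvw)

theorem stmt19_general {α β : Type*}
    (G : SimpleGraph α) (H : SimpleGraph β)
    (hG : G.Connected)
    (a b : α) (hab : a ≠ b) (htw : ¬ TrueTwins G a b) :
    ∀ x y : β, MMD (LexProd G H) (a, x) (b, y) ↔ MMD G a b := by
  intro x y
  constructor
  · rintro ⟨hax, hby⟩
    exact ⟨LexProd.maxDistant_of_maxDistant hG hab x y hax,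
      LexProd.maxDistant_of_maxDistant hG hab.symm y x hby⟩
  · intro h
    have hnadj : ¬ G.Adj a b := fun hadj => htw (h.trueTwins_of_adj hadj)
    exact ⟨LexProd.maxDistant_of_not_adj hG hab x y hnadj h.1,
      LexProd.maxDistant_of_not_adj hG hab.symm y x (fun h' => hnadj h'.symm) h.2⟩

theorem stmt19 {α β : Type*} [Fintype α] [Fintype β]
    (G : SimpleGraph α) (H : SimpleGraph β)
    (hG : G.Connected) (h2G : 2 ≤ Fintype.card α) (h2H : 2 ≤ Fintype.card β)
    (a b : α) (hab : a ≠ b) (htw : ¬ TrueTwins G a b) :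
    ∀ x y : β, MMD (LexProd G H) (a, x) (b, y) ↔ MMD G a b :=
  stmt19_general G H hG a b hab htw
end
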